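/- arXiv:2504.06688 — 3 statements merged into one kernel-verified Lean document; each statement's English description precedes it below -/
import Mathlib

section
/- Let σ be a lock-well-formed execution and let (e1, e2) be a conflicting pair of events of σ with e1 <tr e2. Then (e1, e2) is an HB-race if and only if Cft(e1)(ThreadOf(e1)) > Cft(e2)(ThreadOf(e1)). -/
open scoped Classical

noncomputable section

/-- An operation: read/write of a memory location, or acquire/release of a lock. -/
inductive Op : Type where
  | read (x : ℕ)
  | write (x : ℕ)
  | acq (l : ℕ)
  | rel (l : ℕ)
  deriving DecidableEq

/-- An execution: a finite sequence of (pairwise-distinct) events, each with a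
thread identifier and an operation.  Events are identified with their index
in the sequence, so trace order is the order on `Fin n`. -/
structure Execution : Type where
  n : ℕ
  thread : Fin n → ℕ
  op : Fin n → Op

/-- `o` is a release operation. -/
def Op.isRel (o : Op) : Prop := ∃ l, o = Op.rel l

/-- `o` is a read or write operation. -/
def Op.isAccess (o : Op) : Prop := ∃ x, o = Op.read x ∨ o = Op.write x

/-- `o` accesses memory location `x`. -/
def Op.accesses (o : Op) (x : ℕ) : Prop := o = Op.read x ∨ o = Op.write x

namespace Execution

/-- Event `e` operates on lock `l`. -/
def touches (σ : Execution) (l : ℕ) (e : Fin σ.n) : Prop :=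
  σ.op e = Op.acq l ∨ σ.op e = Op.rel l

/-- Lock-well-formedness: for every lock `l`, the subsequence of events on `l`
alternates acquires and releases beginning with an acquire (an event on `l` is
an acquire iff an even number of events on `l` precede it), and each release of
`l` is performed by the same thread as the immediately preceding acquire of `l`. -/
def LockWellFormed (σ : Execution) : Prop :=
  ∀ l : ℕ, ∀ e : Fin σ.n, σ.touches l e →
    ((σ.op e = Op.acq l ↔
        Even ((Finset.univ.filter (fun f => f < e ∧ σ.touches l f)).card)) ∧
     (σ.op e = Op.rel l →
        ∃ f : Fin σ.n, f < e ∧ σ.op f = Op.acq l ∧ σ.thread f = σ.thread e ∧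
          ∀ g : Fin σ.n, f < g → g < e → ¬ σ.touches l g))

/-- Nonstrict thread order `e1 ≤tho e2`. -/
def tho (σ : Execution) (e1 e2 : Fin σ.n) : Prop :=
  e1 ≤ e2 ∧ σ.thread e1 = σ.thread e2

/-- Strict thread order `e1 <tho e2`. -/
def sTho (σ : Execution) (e1 e2 : Fin σ.n) : Prop :=
  e1 < e2 ∧ σ.thread e1 = σ.thread e2

/-- One step of happens-before: thread order, or a release–acquire edge. -/
def hbStep (σ : Execution) (e1 e2 : Fin σ.n) : Prop :=
  σ.tho e1 e2 ∨ (e1 < e2 ∧ ∃ l, σ.op e1 = Op.rel l ∧ σ.op e2 = Op.acq l)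

/-- Happens-before: reflexive-transitive closure of thread order together
with release–acquire edges. -/
def hb (σ : Execution) : Fin σ.n → Fin σ.n → Prop :=
  Relation.ReflTransGen σ.hbStep

/-- The (finite) set of threads of the events of `σ`. -/
def threads (σ : Execution) : Finset ℕ :=
  Finset.univ.image σ.thread

/-- Local time `Lft(e)`: 1 plus the number of release events thread-order
before `e`. -/
def Lft (σ : Execution) (e : Fin σ.n) : ℕ :=
  (Finset.univ.filter (fun f => (σ.op f).isRel ∧ σ.sTho f e)).card + 1

/-- FastTrack timestamp `Cft(e)(t)`: max of `Lft(f)` over events `f` of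
thread `t` with `f ≤HB e` (0 if there are none). -/
def Cft (σ : Execution) (e : Fin σ.n) (t : ℕ) : ℕ :=
  (Finset.univ.filter (fun f => σ.thread f = t ∧ σ.hb f e)).sup σ.Lft

/-- `T1 ⊑ T2`: pointwise comparison over the threads of `σ`. -/
def VCle (σ : Execution) (T1 T2 : ℕ → ℕ) : Prop :=
  ∀ t ∈ σ.threads, T1 t ≤ T2 t

/-- `(e1, e2)` is a conflicting pair (with `e1 <tr e2`). -/
def Conflicting (σ : Execution) (e1 e2 : Fin σ.n) : Prop :=
  e1 < e2 ∧ σ.thread e1 ≠ σ.thread e2 ∧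
    ∃ x, (σ.op e1).accesses x ∧ (σ.op e2).accesses x ∧
      (σ.op e1 = Op.write x ∨ σ.op e2 = Op.write x)

/-- `(e1, e2)` is an HB-race. -/
def HBRace (σ : Execution) (e1 e2 : Fin σ.n) : Prop :=
  σ.Conflicting e1 e2 ∧ ¬ σ.hb e1 e2

/-- `RelAfter S`: release events that are the first release after some
sampled event, in the same thread. -/
def RelAfter (σ : Execution) (S : Finset (Fin σ.n)) : Finset (Fin σ.n) :=
  Finset.univ.filter (fun f => (σ.op f).isRel ∧
    ∃ e ∈ S, σ.sTho e f ∧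
      ∀ g : Fin σ.n, (σ.op g).isRel → σ.sTho e g → ¬ σ.sTho g f)

/-- Sampling local time `Lsmp(e)`: 1 plus the number of events of `RelAfter S`
thread-order before `e`. -/
def Lsmp (σ : Execution) (S : Finset (Fin σ.n)) (e : Fin σ.n) : ℕ :=
  ((σ.RelAfter S).filter (fun f => σ.sTho f e)).card + 1

/-- Sampling timestamp `Csmp(e)(t)`: max of `Lsmp(f)` over sampled events `f`
of thread `t` with `f ≤HB e` (0 if there are none). -/
def Csmp (σ : Execution) (S : Finset (Fin σ.n)) (e : Fin σ.n) (t : ℕ) : ℕ :=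
  (S.filter (fun f => σ.thread f = t ∧ σ.hb f e)).sup (σ.Lsmp S)

/-- `Csmp⁻(f)`: the sampling timestamp of the immediate thread-order
predecessor of `f`, or the all-zero timestamp if `f` is the first event of
its thread. -/
def CsmpPrev (σ : Execution) (S : Finset (Fin σ.n)) (f : Fin σ.n) : ℕ → ℕ :=
  if h : ∃ f' : Fin σ.n, σ.sTho f' f ∧ ∀ g : Fin σ.n, σ.sTho f' g → ¬ σ.sTho g f
  then σ.Csmp S h.choose
  else fun _ => 0

/-- `VT(e)`: total number of component updates of the sampling timestamp along
the thread of `e`, up to and including `e`. -/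
def VT (σ : Execution) (S : Finset (Fin σ.n)) (e : Fin σ.n) : ℕ :=
  ∑ f ∈ Finset.univ.filter (fun f => σ.tho f e),
    ((σ.threads).filter (fun t => σ.Csmp S f t ≠ σ.CsmpPrev S f t)).card

/-- Freshness timestamp `U(e)(t)`: max of `VT(f)` over events `f` of thread
`t` with `f ≤HB e` (0 if there are none). -/
def Ufr (σ : Execution) (S : Finset (Fin σ.n)) (e : Fin σ.n) (t : ℕ) : ℕ :=
  (Finset.univ.filter (fun f => σ.thread f = t ∧ σ.hb f e)).sup (σ.VT S)

end Execution

namespace Execution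

lemma hbStep_le {σ : Execution} {a b : Fin σ.n} (h : σ.hbStep a b) : a ≤ b := by
  rcases h with ⟨h, _⟩ | ⟨h, _⟩
  · exact h
  · exact le_of_lt h

lemma hb_le {σ : Execution} {a b : Fin σ.n} (h : σ.hb a b) : a ≤ b := by
  induction h with
  | refl => exact le_refl _
  | tail _ hstep ih => exact le_trans ih (hbStep_le hstep)

/-- If `Lft` along thread order is monotone. -/
lemma Lft_mono {σ : Execution} {f e : Fin σ.n} (h : σ.tho f e) :
    σ.Lft f ≤ σ.Lft e := by
  unfold Lft
  have : (Finset.univ.filter (fun g => (σ.op g).isRel ∧ σ.sTho g f)) ⊆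
      (Finset.univ.filter (fun g => (σ.op g).isRel ∧ σ.sTho g e)) := by
    intro g hg
    simp only [Finset.mem_filter, Finset.mem_univ, true_and] at hg ⊢
    exact ⟨hg.1, lt_of_lt_of_le hg.2.1 h.1, hg.2.2.trans h.2⟩
  exact Nat.add_le_add_right (Finset.card_le_card this) 1

/-- Strict increase of `Lft` across a release. -/
lemma Lft_lt {σ : Execution} {f r e : Fin σ.n} (hfr : σ.tho f r)
    (hrel : (σ.op r).isRel) (hre : r < e) (hte : σ.thread r = σ.thread e) :
    σ.Lft f < σ.Lft e := by
  unfold Lft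
  have hss : (Finset.univ.filter (fun g => (σ.op g).isRel ∧ σ.sTho g f)) ⊂
      (Finset.univ.filter (fun g => (σ.op g).isRel ∧ σ.sTho g e)) := by
    constructor
    · intro g hg
      simp only [Finset.mem_filter, Finset.mem_univ, true_and] at hg ⊢
      refine ⟨hg.1, lt_of_lt_of_le hg.2.1 (hfr.1.trans hre.le), ?_⟩
      exact hg.2.2.trans (hfr.2.trans hte)
    · intro hsub
      have hr : r ∈ (Finset.univ.filter (fun g => (σ.op g).isRel ∧ σ.sTho g e)) := by
        simp only [Finset.mem_filter, Finset.mem_univ, true_and]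
        exact ⟨hrel, hre, hte⟩
      have := hsub hr
      simp only [Finset.mem_filter, Finset.mem_univ, true_and] at this
      exact absurd this.2.1 (not_lt_of_ge hfr.1)
  exact Nat.add_lt_add_right (Finset.card_lt_card hss) 1

/-- If `f ≤HB e` and they are on different threads, the HB path leaves the
thread of `f` through a release. -/
lemma exists_rel {σ : Execution} {f e : Fin σ.n} (h : σ.hb f e) :
    σ.thread f ≠ σ.thread e →
    ∃ r : Fin σ.n, (σ.op r).isRel ∧ σ.tho f r ∧ σ.hb r e := by
  induction h with
  | refl => exact fun hne => absurd rfl hne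
  | @tail b c hfb hstep ih =>
    intro hne
    by_cases hfb' : σ.thread f = σ.thread b
    · rcases hstep with ⟨hle, hth⟩ | ⟨hlt, l, hrel, hacq⟩
      · exact absurd (hfb'.trans hth) hne
      · refine ⟨b, ⟨l, hrel⟩, ⟨hb_le hfb, hfb'⟩, ?_⟩
        exact Relation.ReflTransGen.single (Or.inr ⟨hlt, l, hrel, hacq⟩)
    · rcases ih hfb' with ⟨r, hr1, hr2, hr3⟩
      exact ⟨r, hr1, hr2, hr3.tail hstep⟩

lemma Lft_pos {σ : Execution} (e : Fin σ.n) : 0 < σ.Lft e := Nat.succ_pos _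

lemma Cft_self {σ : Execution} (e : Fin σ.n) :
    σ.Cft e (σ.thread e) = σ.Lft e := by
  apply le_antisymm
  · apply Finset.sup_le
    intro f hf
    simp only [Finset.mem_filter, Finset.mem_univ, true_and] at hf
    exact Lft_mono ⟨hb_le hf.2, hf.1⟩
  · apply Finset.le_sup
    simp only [Finset.mem_filter, Finset.mem_univ, true_and]
    exact Relation.ReflTransGen.refl

end Execution

/-- For a lock-well-formed execution and a conflicting pair
`(e1, e2)` with `e1 <tr e2`, the pair is an HB-race iff
`Cft(e1)(ThreadOf e1) > Cft(e2)(ThreadOf e1)`. -/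
theorem stmt1 (σ : Execution) (hwf : σ.LockWellFormed)
    (e1 e2 : Fin σ.n) (hconf : σ.Conflicting e1 e2) :
    σ.HBRace e1 e2 ↔ σ.Cft e2 (σ.thread e1) < σ.Cft e1 (σ.thread e1) := by
  rw [Execution.Cft_self]
  constructor
  · rintro ⟨_, hrace⟩
    rw [Execution.Cft]
    rw [Finset.sup_lt_iff (Execution.Lft_pos e1)]
    intro f hf
    simp only [Finset.mem_filter, Finset.mem_univ, true_and] at hf
    obtain ⟨hft, hfhb⟩ := hf
    have hne2 : σ.thread f ≠ σ.thread e2 := hft ▸ hconf.2.1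
    obtain ⟨r, hrel, hthor, hrhb⟩ := Execution.exists_rel hfhb hne2
    have hr1 : r < e1 := by
      rcases lt_trichotomy r e1 with h | h | h
      · exact h
      · exact absurd (h ▸ hrhb) hrace
      · exfalso
        have hstep : σ.hbStep e1 r := Or.inl ⟨h.le, (hthor.2 ▸ hft).symm⟩
        have : σ.hb e1 r := Relation.ReflTransGen.single hstep
        exact hrace (this.trans hrhb)
    exact Execution.Lft_lt hthor hrel hr1 (hthor.2 ▸ hft)
  · intro h
    refine ⟨hconf, fun hb12 => ?_⟩
    have : σ.Lft e1 ≤ σ.Cft e2 (σ.thread e1) := by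
      apply Finset.le_sup
      simp only [Finset.mem_filter, Finset.mem_univ, true_and]
      exact hb12
    omega
end
end

section
/- Let σ be a lock-well-formed execution and S a set of read/write events of σ. There exist events e1, e2 ∈ S such that (e1, e2) is an HB-race with e1 <tr e2 if and only if there exist events e1, e2 ∈ S forming a conflicting pair with e1 <tr e2 and ¬(Csmp(e1) ⊑ Csmp(e2)). -/
open scoped Classical

noncomputable section

namespace Execution

lemma hb_refl (σ : Execution) (e : Fin σ.n) : σ.hb e e := Relation.ReflTransGen.refl

lemma hb_of_tho {σ : Execution} {e1 e2 : Fin σ.n} (h : σ.tho e1 e2) : σ.hb e1 e2 :=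
  Relation.ReflTransGen.single (Or.inl h)

lemma csmp_mono {σ : Execution} (S : Finset (Fin σ.n)) {e1 e2 : Fin σ.n}
    (h : σ.hb e1 e2) : σ.VCle (σ.Csmp S e1) (σ.Csmp S e2) := by
  intro t _
  apply Finset.sup_mono
  intro f hf
  simp only [Finset.mem_filter] at hf ⊢
  exact ⟨hf.1, hf.2.1, hf.2.2.trans h⟩

lemma escape {σ : Execution} {e2 : Fin σ.n} {f : Fin σ.n}
    (hfe : σ.hb f e2) (hne : σ.thread f ≠ σ.thread e2) :
    ∃ g, (σ.op g).isRel ∧ σ.tho f g ∧ σ.hb g e2 := by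
  induction hfe using Relation.ReflTransGen.head_induction_on with
  | refl => exact absurd rfl hne
  | @head a c hstep hrest ih =>
    by_cases hc : σ.thread c = σ.thread e2
    · cases hstep with
      | inl h => exact absurd (h.2.trans hc) hne
      | inr h =>
        obtain ⟨hlt, l, hrel, hacq⟩ := h
        exact ⟨a, ⟨l, hrel⟩, ⟨le_refl _, rfl⟩,
          Relation.ReflTransGen.head (Or.inr ⟨hlt, l, hrel, hacq⟩) hrest⟩
    · obtain ⟨g, hgrel, hg, hghb⟩ := ih hc
      cases hstep with
      | inl h => exact ⟨g, hgrel, ⟨h.1.trans hg.1, h.2.trans hg.2⟩, hghb⟩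
      | inr h =>
        obtain ⟨hlt, l, hrel, hacq⟩ := h
        exact ⟨a, ⟨l, hrel⟩, ⟨le_refl _, rfl⟩,
          Relation.ReflTransGen.head (Or.inr ⟨hlt, l, hrel, hacq⟩) hrest⟩

lemma access_ne_rel {o : Op} (h : o.isAccess) {l : ℕ} : o ≠ Op.rel l := by
  obtain ⟨x, h | h⟩ := h <;> simp [h]

end Execution

/-- There is an HB-race `(e1, e2)` with `e1, e2 ∈ S` and
`e1 <tr e2` iff there is a conflicting pair `(e1, e2)` with `e1, e2 ∈ S`,
`e1 <tr e2` and `¬(Csmp(e1) ⊑ Csmp(e2))`. -/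
theorem stmt14 (σ : Execution) (hwf : σ.LockWellFormed)
    (S : Finset (Fin σ.n)) (hS : ∀ e ∈ S, (σ.op e).isAccess) :
    (∃ e1 ∈ S, ∃ e2 ∈ S, σ.HBRace e1 e2) ↔
    (∃ e1 ∈ S, ∃ e2 ∈ S, σ.Conflicting e1 e2 ∧
       ¬ σ.VCle (σ.Csmp S e1) (σ.Csmp S e2)) := by
  constructor
  · rintro ⟨e1, he1, e2, he2, hconf, hnhb⟩
    refine ⟨e1, he1, e2, he2, hconf, ?_⟩
    intro hle
    -- timestamps
    have ht1 : σ.thread e1 ∈ σ.threads := Finset.mem_image_of_mem _ (Finset.mem_univ _)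
    have he1self : σ.Lsmp S e1 ≤ σ.Csmp S e1 (σ.thread e1) := by
      exact Finset.le_sup (Finset.mem_filter.mpr ⟨he1, rfl, σ.hb_refl e1⟩)
    have h2 : σ.Lsmp S e1 ≤ σ.Csmp S e2 (σ.thread e1) :=
      le_trans he1self (hle _ ht1)
    have hpos : (⊥ : ℕ) < σ.Lsmp S e1 := Nat.succ_pos _
    obtain ⟨f, hfmem, hLf⟩ := (Finset.le_sup_iff hpos).mp h2
    simp only [Finset.mem_filter] at hfmem
    obtain ⟨hfS, hft, hfhb⟩ := hfmem
    rcases le_or_gt e1 f with hef | hfe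
    · exact hnhb ((Execution.hb_of_tho ⟨hef, hft.symm⟩).trans hfhb)
    · -- f <tho e1 and Lsmp f ≥ Lsmp e1
      have hsTho : σ.sTho f e1 := ⟨hfe, hft⟩
      have hsub : (σ.RelAfter S).filter (fun g => σ.sTho g f) ⊆
          (σ.RelAfter S).filter (fun g => σ.sTho g e1) := by
        intro g hg
        simp only [Finset.mem_filter] at hg ⊢
        exact ⟨hg.1, hg.2.1.trans hsTho.1, hg.2.2.trans hsTho.2⟩
      have hcard : ((σ.RelAfter S).filter (fun g => σ.sTho g e1)).card ≤
          ((σ.RelAfter S).filter (fun g => σ.sTho g f)).card := by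
        have := hLf
        unfold Execution.Lsmp at this
        omega
      have heq := Finset.eq_of_subset_of_card_le hsub hcard
      -- escape from thread
      have hneq : σ.thread f ≠ σ.thread e2 := hft.symm ▸ hconf.2.1
      obtain ⟨g, hgrel, hfg, hghb⟩ := Execution.escape hfhb hneq
      have hfgne : f ≠ g := by
        rintro rfl
        obtain ⟨l, hl⟩ := hgrel
        exact Execution.access_ne_rel (hS f hfS) hl
      have hfg' : σ.sTho f g := ⟨hfg.1.lt_of_ne hfgne, hfg.2⟩
      -- first release after f
      set R : Finset (Fin σ.n) :=
        Finset.univ.filter (fun g' => (σ.op g').isRel ∧ σ.sTho f g') with hR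
      have hgR : g ∈ R := by
        simp only [hR, Finset.mem_filter]
        exact ⟨Finset.mem_univ _, hgrel, hfg'⟩
      have hRne : R.Nonempty := ⟨g, hgR⟩
      set g0 := R.min' hRne with hg0
      have hg0R : g0 ∈ R := R.min'_mem hRne
      simp only [hR, Finset.mem_filter] at hg0R
      have hg0min : ∀ g' ∈ R, g0 ≤ g' := fun g' h => R.min'_le g' h
      have hg0Rel : g0 ∈ σ.RelAfter S := by
        simp only [Execution.RelAfter, Finset.mem_filter]
        refine ⟨Finset.mem_univ _, hg0R.2.1, f, hfS, hg0R.2.2, ?_⟩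
        intro g' hg'rel hfg'' hg'g0
        have : g0 ≤ g' := hg0min g' (by
          simp only [hR, Finset.mem_filter]; exact ⟨Finset.mem_univ _, hg'rel, hfg''⟩)
        exact absurd hg'g0.1 (not_lt.mpr this)
      rcases lt_or_ge g0 e1 with h01 | h10
      · -- g0 <tho e1, so g0 in both filters, so g0 <tho f: contradiction
        have hmem : g0 ∈ (σ.RelAfter S).filter (fun g' => σ.sTho g' e1) := by
          simp only [Finset.mem_filter]
          exact ⟨hg0Rel, h01, hg0R.2.2.2.symm.trans hsTho.2⟩
        rw [← heq] at hmem
        simp only [Finset.mem_filter] at hmem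
        exact absurd hmem.2.1 (not_lt.mpr (le_of_lt hg0R.2.2.1))
      · -- e1 ≤ g0 ≤ g, so e1 ≤tho g, hence hb e1 e2
        have hg0g : g0 ≤ g := hg0min g hgR
        have hthr : σ.thread e1 = σ.thread g := hsTho.2.symm.trans hfg.2
        exact hnhb ((Execution.hb_of_tho ⟨h10.trans hg0g, hthr⟩).trans hghb)
  · rintro ⟨e1, he1, e2, he2, hconf, hnv⟩
    refine ⟨e1, he1, e2, he2, hconf, ?_⟩
    intro hhb
    exact hnv (Execution.csmp_mono S hhb)
end
end

section
/- Let σ be a lock-well-formed execution, S a set of read/write events of σ, and e1, e2 events of σ with t1 = ThreadOf(e1) ≠ ThreadOf(e2). If U(e1)(t1) ≤ U(e2)(t1), then Csmp(e1) ⊑ Csmp(e2). -/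
open scoped Classical

noncomputable section

namespace Execution

variable {σ : Execution} {S : Finset (Fin σ.n)}

lemma tho_refl (e : Fin σ.n) : σ.tho e e := ⟨le_refl _, rfl⟩

lemma tho_trans {a b c : Fin σ.n} (h1 : σ.tho a b) (h2 : σ.tho b c) : σ.tho a c :=
  ⟨le_trans h1.1 h2.1, h1.2.trans h2.2⟩

lemma hb_of_tho_s16 {a b : Fin σ.n} (h : σ.tho a b) : σ.hb a b :=
  Relation.ReflTransGen.single (Or.inl h)

lemma hb_trans {a b c : Fin σ.n} (h1 : σ.hb a b) (h2 : σ.hb b c) : σ.hb a c :=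
  Relation.ReflTransGen.trans h1 h2

lemma Csmp_mono {a b : Fin σ.n} (h : σ.hb a b) (t : ℕ) :
    σ.Csmp S a t ≤ σ.Csmp S b t := by
  apply Finset.sup_mono
  intro f hf
  simp only [Finset.mem_filter] at hf ⊢
  exact ⟨hf.1, hf.2.1, hb_trans hf.2.2 h⟩

lemma VT_mono {a b : Fin σ.n} (h : σ.tho a b) : σ.VT S a ≤ σ.VT S b := by
  apply Finset.sum_le_sum_of_subset
  intro g hg
  simp only [Finset.mem_filter, Finset.mem_univ, true_and] at hg ⊢
  exact tho_trans hg h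

/-- Per-event term in `VT`. -/
def cardterm (σ : Execution) (S : Finset (Fin σ.n)) (g : Fin σ.n) : ℕ :=
  ((σ.threads).filter (fun t => σ.Csmp S g t ≠ σ.CsmpPrev S g t)).card

lemma csmp_eq_prev {g : Fin σ.n} (h : σ.cardterm S g = 0) {t : ℕ}
    (ht : t ∈ σ.threads) : σ.Csmp S g t = σ.CsmpPrev S g t := by
  unfold cardterm at h
  rw [Finset.card_eq_zero, Finset.filter_eq_empty_iff] at h
  have := h ht
  simpa using this

lemma csmpPrev_eq_zero {e : Fin σ.n} (h : ¬ ∃ f' : Fin σ.n, σ.sTho f' e) :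
    σ.CsmpPrev S e = fun _ => 0 := by
  unfold CsmpPrev
  rw [dif_neg]
  intro ⟨f', hf', _⟩
  exact h ⟨f', hf'⟩

/-- If `e` has a thread-order predecessor, `CsmpPrev e` is `Csmp` of the
maximal such predecessor. -/
lemma csmpPrev_eq {e g' : Fin σ.n} (hg' : σ.sTho g' e)
    (hmax : ∀ h : Fin σ.n, σ.sTho h e → h ≤ g') :
    σ.CsmpPrev S e = σ.Csmp S g' := by
  have hex : ∃ f' : Fin σ.n, σ.sTho f' e ∧ ∀ g : Fin σ.n, σ.sTho f' g → ¬ σ.sTho g e := by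
    refine ⟨g', hg', ?_⟩
    intro g hgg hge
    exact absurd (hmax g hge) (not_le_of_gt hgg.1)
  unfold CsmpPrev
  rw [dif_pos hex]
  have hc1 := hex.choose_spec.1
  have hc2 := hex.choose_spec.2
  have hle : hex.choose ≤ g' := hmax _ hc1
  rcases lt_or_eq_of_le hle with hlt | heq
  · exact absurd hg' (hc2 g' ⟨hlt, hc1.2.trans hg'.2.symm⟩)
  · rw [heq]

/-- The maximal strict thread-order predecessor of `e`, given one exists. -/
lemma exists_max_pred {f e : Fin σ.n} (hf : σ.sTho f e) :
    ∃ g' : Fin σ.n, σ.sTho g' e ∧ f ≤ g' ∧ ∀ h : Fin σ.n, σ.sTho h e → h ≤ g' := by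
  classical
  set P : Finset (Fin σ.n) := Finset.univ.filter (fun g => σ.sTho g e) with hP
  have hfP : f ∈ P := by simp [hP, hf]
  have hne : P.Nonempty := ⟨f, hfP⟩
  refine ⟨P.max' hne, ?_, ?_, ?_⟩
  · have := P.max'_mem hne
    simpa [hP] using this
  · exact P.le_max' f hfP
  · intro h hh
    exact P.le_max' h (by simp [hP, hh])

/-- If every event thread-order up to `e` has a zero card term, then
`Csmp e` vanishes on all threads. -/
lemma csmp_zero : ∀ (N : ℕ) (e : Fin σ.n), e.val ≤ N →
    (∀ g : Fin σ.n, σ.tho g e → σ.cardterm S g = 0) →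
    ∀ t ∈ σ.threads, σ.Csmp S e t = 0 := by
  intro N
  induction N with
  | zero =>
    intro e he hcard t ht
    rw [csmp_eq_prev (hcard e (tho_refl e)) ht, csmpPrev_eq_zero]
    rintro ⟨f', hf'⟩
    have : f'.val < e.val := hf'.1
    omega
  | succ N ih =>
    intro e he hcard t ht
    rw [csmp_eq_prev (hcard e (tho_refl e)) ht]
    by_cases hex : ∃ f' : Fin σ.n, σ.sTho f' e
    · obtain ⟨f, hf⟩ := hex
      obtain ⟨g', hg', _, hmax⟩ := exists_max_pred hf
      rw [csmpPrev_eq hg' hmax]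
      have : g'.val < e.val := hg'.1
      exact ih g' (by omega) (fun g hg => hcard g (tho_trans hg ⟨le_of_lt hg'.1, hg'.2⟩)) t ht
    · rw [csmpPrev_eq_zero hex]

/-- If all card terms strictly between `f` and `e` (thread order) vanish,
`Csmp e = Csmp f` on all threads. -/
lemma csmp_stable : ∀ (N : ℕ) (f e : Fin σ.n), e.val ≤ N → σ.tho f e →
    (∀ g : Fin σ.n, f < g → σ.tho g e → σ.cardterm S g = 0) →
    ∀ t ∈ σ.threads, σ.Csmp S e t = σ.Csmp S f t := by
  intro N
  induction N with
  | zero =>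
    intro f e he hfe hcard t ht
    have : f = e := Fin.le_antisymm hfe.1 (by omega)
    rw [this]
  | succ N ih =>
    intro f e he hfe hcard t ht
    rcases eq_or_lt_of_le hfe.1 with heq | hlt
    · rw [← heq]
    · obtain ⟨g', hg', hfg', hmax⟩ := exists_max_pred ⟨hlt, hfe.2⟩
      rw [csmp_eq_prev (hcard e hlt (tho_refl e)) ht, csmpPrev_eq hg' hmax]
      have hfg : σ.tho f g' := ⟨hfg', hfe.2.trans hg'.2.symm⟩
      have hg'e : σ.tho g' e := ⟨le_of_lt hg'.1, hg'.2⟩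
      have : g'.val < e.val := hg'.1
      exact ih f g' (by omega) hfg
        (fun g h1 h2 => hcard g h1 (tho_trans h2 hg'e)) t ht

end Execution

/-- For events `e1, e2` of different threads with
`t1 = ThreadOf e1`, if `U(e1)(t1) ≤ U(e2)(t1)` then `Csmp(e1) ⊑ Csmp(e2)`. -/
theorem stmt16 (σ : Execution) (hwf : σ.LockWellFormed)
    (S : Finset (Fin σ.n)) (hS : ∀ e ∈ S, (σ.op e).isAccess)
    (e1 e2 : Fin σ.n) (hne : σ.thread e1 ≠ σ.thread e2)
    (hu : σ.Ufr S e1 (σ.thread e1) ≤ σ.Ufr S e2 (σ.thread e1)) :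
    σ.VCle (σ.Csmp S e1) (σ.Csmp S e2) := by
  classical
  -- VT e1 ≤ Ufr e1 t1 ≤ Ufr e2 t1
  have h1 : σ.VT S e1 ≤ σ.Ufr S e1 (σ.thread e1) := by
    apply Finset.le_sup
    simp only [Finset.mem_filter, Finset.mem_univ, true_and]
    exact Relation.ReflTransGen.refl
  have h2 : σ.VT S e1 ≤ σ.Ufr S e2 (σ.thread e1) := le_trans h1 hu
  set F : Finset (Fin σ.n) :=
    Finset.univ.filter (fun f => σ.thread f = σ.thread e1 ∧ σ.hb f e2) with hF
  rcases F.eq_empty_or_nonempty with hFe | hFne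
  · -- Ufr e2 t1 = 0, so VT e1 = 0: Csmp e1 vanishes on threads
    have hz : σ.VT S e1 = 0 := by
      have : σ.Ufr S e2 (σ.thread e1) = 0 := by
        unfold Execution.Ufr; rw [← hF, hFe]; simp
      omega
    intro t ht
    have := Execution.csmp_zero (S := S) e1.val e1 le_rfl ?_ t ht
    · rw [this]; exact Nat.zero_le _
    · intro g hg
      have hsum := hz
      unfold Execution.VT at hsum
      rw [Finset.sum_eq_zero_iff] at hsum
      exact hsum g (by simp [hg])
  · obtain ⟨f, hfF, hsup⟩ := F.exists_mem_eq_sup hFne (σ.VT S)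
    rw [hF, Finset.mem_filter] at hfF
    obtain ⟨-, hft, hfhb⟩ := hfF
    have hVTf : σ.VT S e1 ≤ σ.VT S f := by
      have : σ.Ufr S e2 (σ.thread e1) = σ.VT S f := hsup
      omega
    rcases le_or_gt e1 f with hle | hlt
    · -- e1 ≤tho f ≤HB e2
      have : σ.hb e1 e2 :=
        Execution.hb_trans (Execution.hb_of_tho_s16 ⟨hle, hft.symm⟩) hfhb
      intro t ht
      exact Execution.Csmp_mono this t
    · -- f <tho e1, VT f = VT e1: timestamps unchanged between f and e1
      have hfe1 : σ.tho f e1 := ⟨le_of_lt hlt, hft⟩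
      have hVTle : σ.VT S f ≤ σ.VT S e1 := Execution.VT_mono hfe1
      have hVTeq : σ.VT S f = σ.VT S e1 := le_antisymm hVTle hVTf
      -- all card terms strictly between f and e1 vanish
      have hcard : ∀ g : Fin σ.n, f < g → σ.tho g e1 → σ.cardterm S g = 0 := by
        intro g hfg hge1
        set A : Finset (Fin σ.n) := Finset.univ.filter (fun g => σ.tho g e1) with hA
        set B : Finset (Fin σ.n) := Finset.univ.filter (fun g => σ.tho g f) with hB
        have hBA : B ⊆ A := by
          intro x hx
          simp only [hB, hA, Finset.mem_filter, Finset.mem_univ, true_and] at hx ⊢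
          exact Execution.tho_trans hx hfe1
        have hsplit := Finset.sum_sdiff (f := σ.cardterm S) hBA
        have hA1 : σ.VT S e1 = ∑ x ∈ A, σ.cardterm S x := rfl
        have hB1 : σ.VT S f = ∑ x ∈ B, σ.cardterm S x := rfl
        have hzero : ∑ x ∈ A \ B, σ.cardterm S x = 0 := by omega
        rw [Finset.sum_eq_zero_iff] at hzero
        apply hzero
        simp only [Finset.mem_sdiff, hA, hB, Finset.mem_filter, Finset.mem_univ, true_and]
        refine ⟨hge1, ?_⟩
        intro hgf
        exact absurd hgf.1 (not_le_of_gt hfg)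
      intro t ht
      have heqC : σ.Csmp S e1 t = σ.Csmp S f t :=
        Execution.csmp_stable e1.val f e1 le_rfl hfe1 hcard t ht
      rw [heqC]
      exact Execution.Csmp_mono hfhb t
end
end
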